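/- Let Y = Φ∘X be the inverse surface of X under inversion Φ[c,r], with λ = r²/‖X−c‖² and η = ⟨U_X, X−c⟩. Then the Gauss curvatures satisfy K_Y = λ⁻²K_X + (4/r²)λ⁻¹ η H_X + (4/r⁴)η². -/

import Mathlib

/-!
The differential of the inversion at `x` is `λ` times the reflection in the hyperplane
orthogonal to `x - c`, `λ = r² / ‖x - c‖²`. Hence the first fundamental form of `Y` is `λ²` times
that of `X`. Differentiating once more and pairing with the reflected normal `U_Y`, all terms
involving the tangential components of `X - c` cancel, leaving `II_Y = -λ II_X - μ I_X` with
`μ = 2 r² η / ‖X - c‖⁴`. The formula for `K_Y` is then the algebraic effect of this change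
of fundamental forms on `K = det II / det I`.
-/

open RealInnerProductSpace EuclideanGeometry

noncomputable section

def gaussCurvature (E F G e f g : ℝ) : ℝ :=
  (e * g - f ^ 2) / (E * G - F ^ 2)

def meanCurvature (E F G e f g : ℝ) : ℝ :=
  (e * G - 2 * f * F + g * E) / (2 * (E * G - F ^ 2))

theorem gaussCurvature_conformal {E F G e f g l : ℝ} (hreg : E * G - F ^ 2 ≠ 0) (hl : l ≠ 0)
    (m : ℝ) :
    gaussCurvature (l ^ 2 * E) (l ^ 2 * F) (l ^ 2 * G)
        (-(l * e) - m * E) (-(l * f) - m * F) (-(l * g) - m * G)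
      = l⁻¹ ^ 2 * gaussCurvature E F G e f g + 2 * m / l ^ 3 * meanCurvature E F G e f g
        + (m / l ^ 2) ^ 2 := by
  unfold gaussCurvature meanCurvature
  field_simp
  ring

section Inversion

variable {E F : Type*} [NormedAddCommGroup E] [NormedSpace ℝ E]
  [NormedAddCommGroup F] [InnerProductSpace ℝ F]

theorem HasFDerivAt.inv_norm_sq {f : E → F} {f' : E →L[ℝ] F} {p : E}
    (hf : HasFDerivAt f f' p) (hp : f p ≠ 0) :
    HasFDerivAt (fun y => (‖f y‖ ^ 2)⁻¹) (-(2 / ‖f p‖ ^ 4) • (innerSL ℝ (f p)).comp f') p := by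
  refine ((hasDerivAt_inv (by positivity)).comp_hasFDerivAt p hf.norm_sq).congr_fderiv ?_
  ext v
  simp only [smul_apply, ContinuousLinearMap.coe_comp, Function.comp_apply,
    innerSL_apply_apply, smul_eq_mul, nsmul_eq_mul]
  ring

/-- `inversionDeriv r x a` is the differential at `c + x` of the inversion with center `c` and
radius `r`, applied to `a`. -/
def inversionDeriv (r : ℝ) (x a : F) : F :=
  (r ^ 2 / ‖x‖ ^ 2) • (a - (2 * ⟪x, a⟫ / ‖x‖ ^ 2) • x)

/-- The derivative of `y ↦ inversionDeriv r (x y) (a y)` in a direction along which `x` and `a`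
have derivatives `b` and `ab`. -/
def inversionSecondDeriv (r : ℝ) (x a b ab : F) : F :=
  inversionDeriv r x ab - (2 * r ^ 2 / ‖x‖ ^ 4) • (⟪x, b⟫ • a + ⟪x, a⟫ • b + ⟪a, b⟫ • x)
    + (8 * r ^ 2 * ⟪x, a⟫ * ⟪x, b⟫ / ‖x‖ ^ 6) • x

theorem EuclideanGeometry.inversion_eq_add_smul (c x : F) (r : ℝ) :
    inversion c r x = c + (r ^ 2 / ‖x - c‖ ^ 2) • (x - c) := by
  rw [inversion, vsub_eq_sub, vadd_eq_add, add_comm, div_pow, dist_eq_norm]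

theorem fderiv_inversion_comp_apply (c : F) (r : ℝ) {X : E → F} {p : E}
    (hX : DifferentiableAt ℝ X p) (hp : X p ≠ c) (v : E) :
    fderiv ℝ (inversion c r ∘ X) p v = inversionDeriv r (X p - c) (fderiv ℝ X p v) := by
  have hd := hX.hasFDerivAt.sub_const c
  have hp' : X p - c ≠ 0 := sub_ne_zero.mpr hp
  simp only [Function.comp_def, inversion_eq_add_smul, div_eq_mul_inv]
  erw [((((hd.inv_norm_sq hp').const_mul (r ^ 2)).smul hd).const_add c).fderiv]
  simp only [add_apply, smul_apply, ContinuousLinearMap.smulRight_apply,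
    ContinuousLinearMap.coe_comp, Function.comp_apply, innerSL_apply_apply, smul_eq_mul,
    inversionDeriv]
  match_scalars <;> field_simp

theorem fderiv_inversionDeriv_comp_apply (c : F) (r : ℝ) {X g : E → F} {p : E}
    (hX : DifferentiableAt ℝ X p) (hg : DifferentiableAt ℝ g p) (hp : X p ≠ c) (w : E) :
    fderiv ℝ (fun y => inversionDeriv r (X y - c) (g y)) p w
      = inversionSecondDeriv r (X p - c) (g p) (fderiv ℝ X p w) (fderiv ℝ g p w) := by
  have hd := hX.hasFDerivAt.sub_const c
  have hinv := hd.inv_norm_sq (sub_ne_zero.mpr hp)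
  have hF := (hinv.const_mul (r ^ 2)).smul
    (hg.hasFDerivAt.sub (((hd.inner ℝ hg.hasFDerivAt).const_mul 2 |>.mul hinv).smul hd))
  simp only [inversionDeriv, div_eq_mul_inv]
  erw [hF.fderiv]
  simp only [add_apply, smul_apply, sub_apply, ContinuousLinearMap.smulRight_apply,
    ContinuousLinearMap.coe_comp, Function.comp_apply, innerSL_apply_apply, smul_eq_mul,
    inversionSecondDeriv, inversionDeriv, ContinuousLinearMap.prod_apply, fderivInnerCLM_apply,
    Pi.mul_apply, Pi.smul_apply', Pi.sub_apply]
  rw [real_inner_comm (g p) (fderiv ℝ X p w)]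
  match_scalars <;> field_simp <;> ring

theorem fderiv_fderiv_inversion_comp_apply (c : F) (r : ℝ) {X : E → F} (hX : ContDiff ℝ 2 X)
    (hXc : ∀ p, X p ≠ c) (q v w : E) :
    fderiv ℝ (fun p => fderiv ℝ (inversion c r ∘ X) p v) q w
      = inversionSecondDeriv r (X q - c) (fderiv ℝ X q v) (fderiv ℝ X q w)
          (fderiv ℝ (fun p => fderiv ℝ X p v) q w) := by
  have hX₁ : Differentiable ℝ X := hX.differentiable two_ne_zero
  have hXv : Differentiable ℝ (fun p => fderiv ℝ X p v) :=
    ((hX.fderiv_right one_add_one_eq_two.le).clm_apply contDiff_const).differentiable one_ne_zero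
  simp_rw [fderiv_inversion_comp_apply c r (hX₁ _) (hXc _)]
  exact fderiv_inversionDeriv_comp_apply c r (hX₁ q) (hXv q) (hXc q) w

theorem inner_inversionDeriv (r : ℝ) {x : F} (hx : x ≠ 0) (a b : F) :
    ⟪inversionDeriv r x a, inversionDeriv r x b⟫ = (r ^ 2 / ‖x‖ ^ 2) ^ 2 * ⟪a, b⟫ := by
  simp only [inversionDeriv, inner_smul_left, inner_smul_right, inner_sub_left, inner_sub_right,
    real_inner_self_eq_norm_sq, real_inner_comm x, conj_trivial]
  field_simp
  ring

theorem inner_inversionSecondDeriv_reflect (r : ℝ) {x a b ab u : F} (hx : x ≠ 0)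
    (ha : ⟪a, u⟫ = 0) (hb : ⟪b, u⟫ = 0) :
    ⟪inversionSecondDeriv r x a b ab, -u + (2 * ⟪u, x⟫ / ‖x‖ ^ 2) • x⟫
      = -(r ^ 2 / ‖x‖ ^ 2 * ⟪ab, u⟫) - 2 * r ^ 2 * ⟪u, x⟫ / ‖x‖ ^ 4 * ⟪a, b⟫ := by
  simp only [inversionSecondDeriv, inversionDeriv, inner_add_left, inner_add_right,
    inner_sub_left, inner_smul_left, inner_smul_right, inner_neg_right,
    real_inner_self_eq_norm_sq, ha, hb, conj_trivial]
  rw [real_inner_comm x ab, real_inner_comm x a, real_inner_comm x b, real_inner_comm x u]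
  field_simp
  ring

theorem inner_fderiv_inversion_comp (c : F) (r : ℝ) {X : E → F} {p : E}
    (hX : DifferentiableAt ℝ X p) (hp : X p ≠ c) (v w : E) :
    ⟪fderiv ℝ (inversion c r ∘ X) p v, fderiv ℝ (inversion c r ∘ X) p w⟫
      = (r ^ 2 / ‖X p - c‖ ^ 2) ^ 2 * ⟪fderiv ℝ X p v, fderiv ℝ X p w⟫ := by
  rw [fderiv_inversion_comp_apply c r hX hp, fderiv_inversion_comp_apply c r hX hp,
    inner_inversionDeriv r (sub_ne_zero.mpr hp)]

theorem inner_fderiv_fderiv_inversion_comp_reflect (c : F) (r : ℝ) {X : E → F}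
    (hX : ContDiff ℝ 2 X) (hXc : ∀ p, X p ≠ c) {q v w : E} {u : F}
    (hv : ⟪fderiv ℝ X q v, u⟫ = 0) (hw : ⟪fderiv ℝ X q w, u⟫ = 0) :
    ⟪fderiv ℝ (fun p => fderiv ℝ (inversion c r ∘ X) p v) q w,
        -u + (2 * ⟪u, X q - c⟫ / ‖X q - c‖ ^ 2) • (X q - c)⟫
      = -(r ^ 2 / ‖X q - c‖ ^ 2 * ⟪fderiv ℝ (fun p => fderiv ℝ X p v) q w, u⟫)
        - 2 * r ^ 2 * ⟪u, X q - c⟫ / ‖X q - c‖ ^ 4 * ⟪fderiv ℝ X q v, fderiv ℝ X q w⟫ := by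
  rw [fderiv_fderiv_inversion_comp_apply c r hX hXc,
    inner_inversionSecondDeriv_reflect r (sub_ne_zero.mpr (hXc q)) hv hw]

end Inversion

end

theorem inverse_surface_gauss_curvature_general
    (c : EuclideanSpace ℝ (Fin 3)) (r : ℝ) (hr : 0 < r)
    (Φ : EuclideanSpace ℝ (Fin 3) → EuclideanSpace ℝ (Fin 3))
    (hΦ : ∀ p, Φ p = c + (r ^ 2 / ‖p - c‖ ^ 2) • (p - c))
    (X : ℝ × ℝ → EuclideanSpace ℝ (Fin 3)) (hX : ContDiff ℝ 2 X)
    (hXc : ∀ q, X q ≠ c)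
    (Y : ℝ × ℝ → EuclideanSpace ℝ (Fin 3)) (hY : Y = Φ ∘ X)
    (q : ℝ × ℝ)
    -- first and second partial derivatives of X and Y at q
    (Xs Xu Xss Xsu Xuu Ys Yu Yss Ysu Yuu UX UY : EuclideanSpace ℝ (Fin 3))
    (hXs : Xs = fderiv ℝ X q (1, 0)) (hXu : Xu = fderiv ℝ X q (0, 1))
    (hXss : Xss = fderiv ℝ (fun p => fderiv ℝ X p (1, 0)) q (1, 0))
    (hXsu : Xsu = fderiv ℝ (fun p => fderiv ℝ X p (1, 0)) q (0, 1))
    (hXuu : Xuu = fderiv ℝ (fun p => fderiv ℝ X p (0, 1)) q (0, 1))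
    (hYs : Ys = fderiv ℝ Y q (1, 0)) (hYu : Yu = fderiv ℝ Y q (0, 1))
    (hYss : Yss = fderiv ℝ (fun p => fderiv ℝ Y p (1, 0)) q (1, 0))
    (hYsu : Ysu = fderiv ℝ (fun p => fderiv ℝ Y p (1, 0)) q (0, 1))
    (hYuu : Yuu = fderiv ℝ (fun p => fderiv ℝ Y p (0, 1)) q (0, 1))
    -- UX is the unit normal of X at q; UY is the appropriately oriented
    -- unit normal of the inverse patch Y at q
    (hUXs : ⟪Xs, UX⟫ = 0) (hUXu : ⟪Xu, UX⟫ = 0)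
    (hUY : UY = -UX + (2 * ⟪UX, X q - c⟫ / ‖X q - c‖ ^ 2) • (X q - c))
    -- fundamental form coefficients of X and Y at q
    (EX FX GX eX fX gX EY FY GY eY fY gY lam eta KX HX KY : ℝ)
    (hEX : EX = ⟪Xs, Xs⟫) (hFX : FX = ⟪Xs, Xu⟫) (hGX : GX = ⟪Xu, Xu⟫)
    (heX : eX = ⟪Xss, UX⟫) (hfX : fX = ⟪Xsu, UX⟫) (hgX : gX = ⟪Xuu, UX⟫)
    (hEY : EY = ⟪Ys, Ys⟫) (hFY : FY = ⟪Ys, Yu⟫) (hGY : GY = ⟪Yu, Yu⟫)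
    (heY : eY = ⟪Yss, UY⟫) (hfY : fY = ⟪Ysu, UY⟫) (hgY : gY = ⟪Yuu, UY⟫)
    -- regularity of X at q
    (hreg : 0 < EX * GX - FX ^ 2)
    (hlam : lam = r ^ 2 / ‖X q - c‖ ^ 2) (heta : eta = ⟪UX, X q - c⟫)
    (hKX : KX = (eX * gX - fX ^ 2) / (EX * GX - FX ^ 2))
    (hHX : HX = (eX * GX - 2 * fX * FX + gX * EX) / (2 * (EX * GX - FX ^ 2)))
    (hKY : KY = (eY * gY - fY ^ 2) / (EY * GY - FY ^ 2)) :
    KY = lam⁻¹ ^ 2 * KX + (4 / r ^ 2) * lam⁻¹ * eta * HX + (4 / r ^ 4) * eta ^ 2 := by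
  have hΦ_eq : Φ = inversion c r := funext fun p => (hΦ p).trans (inversion_eq_add_smul c p r).symm
  subst hΦ_eq hY
  obtain ⟨m, hm⟩ : ∃ m, m = 2 * r ^ 2 * eta / ‖X q - c‖ ^ 4 := ⟨_, rfl⟩
  have hI (v w) := inner_fderiv_inversion_comp c r (hX.differentiable two_ne_zero q) (hXc q) v w
  have hII {v w} (hv : ⟪fderiv ℝ X q v, UX⟫ = 0) (hw : ⟪fderiv ℝ X q w, UX⟫ = 0) :
      ⟪fderiv ℝ (fun p => fderiv ℝ (inversion c r ∘ X) p v) q w, UY⟫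
        = -(lam * ⟪fderiv ℝ (fun p => fderiv ℝ X p v) q w, UX⟫)
          - m * ⟪fderiv ℝ X q v, fderiv ℝ X q w⟫ := by
    rw [hUY, inner_fderiv_fderiv_inversion_comp_reflect c r hX hXc hv hw, hlam, hm, heta]
  subst hXs hXu
  have hEY' : EY = lam ^ 2 * EX := by rw [hEY, hEX, hYs, hI, hlam]
  have hFY' : FY = lam ^ 2 * FX := by rw [hFY, hFX, hYs, hYu, hI, hlam]
  have hGY' : GY = lam ^ 2 * GX := by rw [hGY, hGX, hYu, hI, hlam]
  have heY' : eY = -(lam * eX) - m * EX := by rw [heY, heX, hEX, hYss, hII hUXs hUXs, hXss]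
  have hfY' : fY = -(lam * fX) - m * FX := by rw [hfY, hfX, hFX, hYsu, hII hUXs hUXu, hXsu]
  have hgY' : gY = -(lam * gX) - m * GX := by rw [hgY, hgX, hGX, hYuu, hII hUXu hUXu, hXuu]
  have hn : ‖X q - c‖ ≠ 0 := norm_ne_zero_iff.mpr (sub_ne_zero.mpr (hXc q))
  have hlam0 : lam ≠ 0 := hlam ▸ div_ne_zero (pow_ne_zero 2 hr.ne') (pow_ne_zero 2 hn)
  calc KY
    _ = gaussCurvature (lam ^ 2 * EX) (lam ^ 2 * FX) (lam ^ 2 * GX)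
          (-(lam * eX) - m * EX) (-(lam * fX) - m * FX) (-(lam * gX) - m * GX) := by
      rw [hKY, hEY', hFY', hGY', heY', hfY', hgY', gaussCurvature]
    _ = lam⁻¹ ^ 2 * KX + 2 * m / lam ^ 3 * HX + (m / lam ^ 2) ^ 2 := by
      rw [gaussCurvature_conformal hreg.ne' hlam0, hKX, hHX, gaussCurvature, meanCurvature]
    _ = lam⁻¹ ^ 2 * KX + (4 / r ^ 2) * lam⁻¹ * eta * HX + (4 / r ^ 4) * eta ^ 2 := by
      rw [hm, hlam]
      field_simp
      ring

/-- For the inverse surface `Y = Φ∘X` under the inversion `Φ[c,r]`, with `λ = r²/‖X−c‖²`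
and `η = ⟨U_X, X−c⟩`, the Gauss curvatures satisfy
`K_Y = λ⁻²K_X + (4/r²)λ⁻¹ηH_X + (4/r⁴)η²`. -/
theorem inverse_surface_gauss_curvature
    (c : EuclideanSpace ℝ (Fin 3)) (r : ℝ) (hr : 0 < r)
    (Φ : EuclideanSpace ℝ (Fin 3) → EuclideanSpace ℝ (Fin 3))
    (hΦ : ∀ p, Φ p = c + (r ^ 2 / ‖p - c‖ ^ 2) • (p - c))
    (X : ℝ × ℝ → EuclideanSpace ℝ (Fin 3)) (hX : ContDiff ℝ 2 X)
    (hXc : ∀ q, X q ≠ c)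
    (Y : ℝ × ℝ → EuclideanSpace ℝ (Fin 3)) (hY : Y = Φ ∘ X)
    (q : ℝ × ℝ)
    -- first and second partial derivatives of X and Y at q
    (Xs Xu Xss Xsu Xuu Ys Yu Yss Ysu Yuu UX UY : EuclideanSpace ℝ (Fin 3))
    (hXs : Xs = fderiv ℝ X q (1, 0)) (hXu : Xu = fderiv ℝ X q (0, 1))
    (hXss : Xss = fderiv ℝ (fun p => fderiv ℝ X p (1, 0)) q (1, 0))
    (hXsu : Xsu = fderiv ℝ (fun p => fderiv ℝ X p (1, 0)) q (0, 1))
    (hXuu : Xuu = fderiv ℝ (fun p => fderiv ℝ X p (0, 1)) q (0, 1))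
    (hYs : Ys = fderiv ℝ Y q (1, 0)) (hYu : Yu = fderiv ℝ Y q (0, 1))
    (hYss : Yss = fderiv ℝ (fun p => fderiv ℝ Y p (1, 0)) q (1, 0))
    (hYsu : Ysu = fderiv ℝ (fun p => fderiv ℝ Y p (1, 0)) q (0, 1))
    (hYuu : Yuu = fderiv ℝ (fun p => fderiv ℝ Y p (0, 1)) q (0, 1))
    -- UX is the unit normal of X at q; UY is the appropriately oriented
    -- unit normal of the inverse patch Y at q
    (hUXunit : ‖UX‖ = 1) (hUXs : ⟪Xs, UX⟫ = 0) (hUXu : ⟪Xu, UX⟫ = 0)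
    (hUY : UY = -UX + (2 * ⟪UX, X q - c⟫ / ‖X q - c‖ ^ 2) • (X q - c))
    -- fundamental form coefficients of X and Y at q
    (EX FX GX eX fX gX EY FY GY eY fY gY lam eta KX HX KY HY : ℝ)
    (hEX : EX = ⟪Xs, Xs⟫) (hFX : FX = ⟪Xs, Xu⟫) (hGX : GX = ⟪Xu, Xu⟫)
    (heX : eX = ⟪Xss, UX⟫) (hfX : fX = ⟪Xsu, UX⟫) (hgX : gX = ⟪Xuu, UX⟫)
    (hEY : EY = ⟪Ys, Ys⟫) (hFY : FY = ⟪Ys, Yu⟫) (hGY : GY = ⟪Yu, Yu⟫)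
    (heY : eY = ⟪Yss, UY⟫) (hfY : fY = ⟪Ysu, UY⟫) (hgY : gY = ⟪Yuu, UY⟫)
    -- regularity of X at q
    (hreg : 0 < EX * GX - FX ^ 2)
    (hlam : lam = r ^ 2 / ‖X q - c‖ ^ 2) (heta : eta = ⟪UX, X q - c⟫)
    (hKX : KX = (eX * gX - fX ^ 2) / (EX * GX - FX ^ 2))
    (hHX : HX = (eX * GX - 2 * fX * FX + gX * EX) / (2 * (EX * GX - FX ^ 2)))
    (hKY : KY = (eY * gY - fY ^ 2) / (EY * GY - FY ^ 2))
    (hHY : HY = (eY * GY - 2 * fY * FY + gY * EY) / (2 * (EY * GY - FY ^ 2))) :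
    KY = lam⁻¹ ^ 2 * KX + (4 / r ^ 2) * lam⁻¹ * eta * HX + (4 / r ^ 4) * eta ^ 2 :=
  inverse_surface_gauss_curvature_general c r hr Φ hΦ X hX hXc Y hY q Xs Xu Xss Xsu Xuu Ys Yu Yss
    Ysu Yuu UX UY hXs hXu hXss hXsu hXuu hYs hYu hYss hYsu hYuu hUXs hUXu hUY EX FX GX eX fX gX EY
    FY GY eY fY gY lam eta KX HX KY hEX hFX hGX heX hfX hgX hEY hFY hGY heY hfY hgY hreg hlam heta
    hKX hHX hKY
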